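/- arXiv:1012.0412 — 6 statements merged into one kernel-verified Lean document; each statement's English description precedes it below -/
import Mathlib

section
/- For all p in (0,1/2) ∪ (1/2,1), e^{2H[B(2,p)]} < e^{2H[B(1,p)]} + e^{2H[B(1,p)]}, i.e. the discrete entropy power inequality fails for two copies of B(1,p) when p ≠ 1/2. -/
open Real

noncomputable def binEnt (p : ℝ) : ℝ := -(p * Real.log p) - (1 - p) * Real.log (1 - p)

noncomputable def binomPmf (n : ℕ) (p : ℝ) (k : ℕ) : ℝ :=
  (n.choose k : ℝ) * p ^ k * (1 - p) ^ (n - k)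

noncomputable def binomEnt (n : ℕ) (p : ℝ) : ℝ :=
  -∑ k ∈ Finset.range (n + 1), binomPmf n p k * Real.log (binomPmf n p k)

/-!
Since `H[B(1,p)]` is the binary entropy `h(p)` and `H[B(2,p)] = 2 h(p) - 2p(1-p) log 2`, taking
logarithms turns the claim into `h(p) < log 2 - 2 log 2 (p - 1/2)²`. The difference of the two sides
has second derivative `1/(p(1-p)) - 4 log 2 ≥ 4 - 4 log 2 > 0`, so it is strictly convex on `[0,1]`;
being symmetric about `1/2`, where it vanishes, it is positive everywhere else.
-/

namespace Real

lemma contDiffAt_binEntropy {n : WithTop ℕ∞} {x : ℝ} (hx₀ : x ≠ 0) (hx₁ : x ≠ 1) :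
    ContDiffAt ℝ n binEntropy x := by
  have : 1 - x ≠ 0 := sub_ne_zero.2 hx₁.symm
  unfold binEntropy
  fun_prop (disch := simp [*])

noncomputable def binEntropyDefect (p : ℝ) : ℝ :=
  log 2 - binEntropy p - 2 * log 2 * (p - 2⁻¹) ^ 2

lemma binEntropyDefect_one_sub (p : ℝ) : binEntropyDefect (1 - p) = binEntropyDefect p := by
  simp only [binEntropyDefect, binEntropy_one_sub]
  ring

lemma binEntropyDefect_two_inv : binEntropyDefect 2⁻¹ = 0 := by
  simp [binEntropyDefect]

lemma iteratedDeriv_two_binEntropyDefect {x : ℝ} (hx₀ : x ≠ 0) (hx₁ : x ≠ 1) :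
    iteratedDeriv 2 binEntropyDefect x = 1 / (x * (1 - x)) - 4 * log 2 := by
  have := contDiffAt_binEntropy (n := 2) hx₀ hx₁
  rw [show binEntropyDefect =
      (fun p => log 2 - binEntropy p) - fun p => 2 * log 2 * (p - 2⁻¹) ^ 2 from rfl,
    iteratedDeriv_sub (by fun_prop) (by fun_prop), iteratedDeriv_const_sub two_pos,
    iteratedDeriv_const_mul_field, iteratedDeriv_comp_sub_const (f := fun p => p ^ 2)]
  beta_reduce
  rw [iteratedDeriv_pow, iteratedDeriv_neg, iteratedDeriv_eq_iterate, deriv2_binEntropy,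
    neg_div, neg_neg, Nat.descFactorial_self, Nat.sub_self, pow_zero]
  ring

lemma strictConvexOn_binEntropyDefect : StrictConvexOn ℝ (Set.Icc 0 1) binEntropyDefect := by
  refine strictConvexOn_of_deriv2_pos (convex_Icc 0 1)
    (by unfold binEntropyDefect; fun_prop) fun x hx => ?_
  obtain ⟨hx₀, hx₁⟩ : x ∈ Set.Ioo 0 1 := by rwa [interior_Icc] at hx
  rw [← iteratedDeriv_eq_iterate, iteratedDeriv_two_binEntropyDefect hx₀.ne' hx₁.ne]
  have hvar : x * (1 - x) ≤ 4⁻¹ := by nlinarith [sq_nonneg (x - 2⁻¹)]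
  have hinv : 4 ≤ 1 / (x * (1 - x)) := by
    rw [le_one_div (by norm_num) (by nlinarith)]
    simpa using hvar
  linarith [log_two_lt_d9]

lemma binEntropy_lt_log_two_sub_sq {p : ℝ} (hp : p ∈ Set.Icc 0 1) (hne : p ≠ 2⁻¹) :
    binEntropy p < log 2 - 2 * log 2 * (p - 2⁻¹) ^ 2 := by
  have hq : 1 - p ∈ Set.Icc 0 1 := ⟨by linarith [hp.2], by linarith [hp.1]⟩
  have hmid := strictConvexOn_binEntropyDefect.2 hp hq (fun h => hne (by linarith))
    (by norm_num : (0 : ℝ) < 2⁻¹) (by norm_num : (0 : ℝ) < 2⁻¹) (by norm_num)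
  rw [binEntropyDefect_one_sub, ← add_smul, smul_eq_mul, smul_eq_mul, smul_eq_mul,
    show (2⁻¹ : ℝ) * p + 2⁻¹ * (1 - p) = 2⁻¹ by ring, binEntropyDefect_two_inv] at hmid
  have : 0 < binEntropyDefect p := by linarith
  unfold binEntropyDefect at this
  linarith

end Real

lemma binomEnt_one (p : ℝ) : binomEnt 1 p = binEntropy p := by
  simp [binomEnt, binomPmf, Finset.sum_range_succ, binEntropy, log_inv]

lemma binomEnt_two (p : ℝ) : binomEnt 2 p = 2 * binEntropy p - 2 * p * (1 - p) * log 2 := by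
  rcases eq_or_ne p 0 with rfl | hp₀
  · simp [binomEnt, binomPmf, Finset.sum_range_succ]
  rcases eq_or_ne p 1 with rfl | hp₁
  · simp [binomEnt, binomPmf, Finset.sum_range_succ]
  have hq : 1 - p ≠ 0 := sub_ne_zero.2 hp₁.symm
  simp [binomEnt, binomPmf, Finset.sum_range_succ, binEntropy, log_inv, log_mul, log_pow, hp₀, hq]
  ring

theorem epi_fails_binom_two (p : ℝ) (hp : p ∈ Set.Ioo (0:ℝ) 1) (hne : p ≠ 1/2) :
    Real.exp (2 * binomEnt 2 p) <
      Real.exp (2 * binomEnt 1 p) + Real.exp (2 * binomEnt 1 p) := by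
  have key := binEntropy_lt_log_two_sub_sq (Set.Ioo_subset_Icc_self hp) (by rwa [← one_div])
  rw [binomEnt_one, binomEnt_two]
  calc exp (2 * (2 * binEntropy p - 2 * p * (1 - p) * log 2))
      < exp (log 2 + 2 * binEntropy p) := exp_lt_exp.2 (by linear_combination 2 * key)
    _ = exp (2 * binEntropy p) + exp (2 * binEntropy p) := by
      rw [exp_add, exp_log two_pos, two_mul]
end

section
/- For p in (0,1), log 2 − H(p) = ∑_{ν=1}^∞ [2^{2ν} / (2ν(2ν−1))] (p − 1/2)^{2ν}, where H is the binary entropy with natural logarithm. -/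
open Real

/-!
Put `x = 2p - 1`, so that `1 ± x` are `2p` and `2(1 - p)`. Then `log 2 - H(p)` becomes
`((1 + x) log (1 + x) + (1 - x) log (1 - x)) / 2`, and the partial fractions
`1 / (2n (2n - 1)) = 1 / (2n - 1) - 1 / (2n)` split the series into `x · artanh x`
and `-log (1 - x²) / 2`, whose sum is exactly that expression.
-/

namespace Real

variable {x : ℝ}

theorem hasSum_pow_two_mul_add_two_div_two_mul_add_one (hx : |x| < 1) :
    HasSum (fun k : ℕ => x ^ (2 * k + 2) / (2 * k + 1))
      (x / 2 * (log (1 + x) - log (1 - x))) := by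
  refine ((hasSum_log_sub_log_of_abs_lt_one hx).mul_left (x / 2)).congr_fun fun k => ?_
  field_simp
  ring

theorem hasSum_pow_two_mul_add_two_div_two_mul_add_two (hx : |x| < 1) :
    HasSum (fun k : ℕ => x ^ (2 * k + 2) / (2 * k + 2)) (-log (1 - x ^ 2) / 2) := by
  have hx2 : |x ^ 2| < 1 := by
    rw [abs_pow]
    exact pow_lt_one₀ (abs_nonneg x) hx two_ne_zero
  refine ((hasSum_pow_div_log_of_abs_lt_one hx2).div_const 2).congr_fun fun k => ?_
  rw [← pow_mul]
  field_simp
  ring_nf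

theorem hasSum_pow_two_mul_div_two_mul_mul_two_mul_sub_one (hx : |x| < 1) :
    HasSum (fun k : ℕ => x ^ (2 * (k + 1)) / ((2 * (k + 1)) * (2 * (k + 1) - 1)))
      (((1 + x) * log (1 + x) + (1 - x) * log (1 - x)) / 2) := by
  have h1x : 0 < 1 + x := by linarith [neg_abs_le x]
  have h1x' : 0 < 1 - x := by linarith [le_abs_self x]
  have hsum := (hasSum_pow_two_mul_add_two_div_two_mul_add_one hx).sub
    (hasSum_pow_two_mul_add_two_div_two_mul_add_two hx)
  rw [show 1 - x ^ 2 = (1 + x) * (1 - x) by ring, log_mul h1x.ne' h1x'.ne'] at hsum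
  rw [show ((1 + x) * log (1 + x) + (1 - x) * log (1 - x)) / 2 =
    x / 2 * (log (1 + x) - log (1 - x)) - -(log (1 + x) + log (1 - x)) / 2 by ring]
  refine hsum.congr_fun fun k => ?_
  have hodd : (2 * ((k : ℝ) + 1) - 1) ≠ 0 := by
    rw [show 2 * ((k : ℝ) + 1) - 1 = 2 * k + 1 by ring]
    positivity
  rw [show 2 * (k + 1) = 2 * k + 2 by ring]
  field_simp
  ring

end Real

theorem log_two_sub_binEnt_eq {p : ℝ} (hp : p ∈ Set.Ioo (0:ℝ) 1) :
    log 2 - binEnt p =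
      ((1 + (2 * p - 1)) * log (1 + (2 * p - 1)) +
        (1 - (2 * p - 1)) * log (1 - (2 * p - 1))) / 2 := by
  obtain ⟨hp0, hp1⟩ := hp
  rw [show 1 + (2 * p - 1) = 2 * p by ring, show 1 - (2 * p - 1) = 2 * (1 - p) by ring,
    log_mul two_ne_zero hp0.ne', log_mul two_ne_zero (sub_pos.2 hp1).ne', binEnt]
  ring

theorem log_two_sub_binEnt_series (p : ℝ) (hp : p ∈ Set.Ioo (0:ℝ) 1) :
    Real.log 2 - binEnt p =
      ∑' ν : ℕ, (2 ^ (2 * (ν + 1)) : ℝ) / ((2 * (ν + 1)) * (2 * (ν + 1) - 1)) *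
        (p - 1/2) ^ (2 * (ν + 1)) := by
  have hx : |2 * p - 1| < 1 := by
    rw [abs_lt]
    constructor <;> linarith [hp.1, hp.2]
  rw [log_two_sub_binEnt_eq hp,
    ← (Real.hasSum_pow_two_mul_div_two_mul_mul_two_mul_sub_one hx).tsum_eq]
  congr 1
  funext ν
  rw [div_mul_eq_mul_div, ← mul_pow]
  ring_nf
end

section
/- For every p ∈ (0,1), every x ∈ (0,1), and every nonnegative integer l, H(p) − H(x) ≥ ∑_{k=1}^{2l+1} F^{(k)}(p) (x − p)^k, where F^{(1)}(p) = log(p/(1−p)) and F^{(k)}(p) = [ (1−p)^{−(k−1)} + (−1)^k p^{−(k−1)} ] / (k(k−1)) for k ≥ 2. -/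
open Real

noncomputable def Fcoef (k : ℕ) (p : ℝ) : ℝ :=
  if k = 1 then Real.log (p / (1 - p))
  else ((1 - p) ^ (-((k : ℤ) - 1)) + (-1 : ℝ) ^ k * p ^ (-((k : ℤ) - 1))) /
        ((k : ℝ) * ((k : ℝ) - 1))

/-! If every even-order derivative of a smooth function `f` is nonnegative on an interval, then
Taylor's theorem with the Lagrange remainder shows that `f` lies above each of its Taylor
polynomials of odd degree `n`, since the remainder `f⁽ⁿ⁺¹⁾(ξ) (x - p)ⁿ⁺¹ / (n + 1)!` is a product of
nonnegative factors. On `(0, 1)` the `k`-th derivative of `-H` is, for `k ≥ 2`,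
`(k - 2)! ((-1)ᵏ t^{-(k-1)} + (1 - t)^{-(k-1)})`, which is nonnegative for even `k`, and its Taylor
coefficients `f⁽ᵏ⁾(p) / k!` are exactly the `F⁽ᵏ⁾(p)`. -/

open Set Nat

theorem iteratedDerivWithin_eqOn_of_hasDerivWithinAt {D : ℕ → ℝ → ℝ} {s : Set ℝ}
    (hs : UniqueDiffOn ℝ s) (hD : ∀ k, ∀ t ∈ s, HasDerivWithinAt (D k) (D (k + 1) t) s t)
    (k : ℕ) : EqOn (iteratedDerivWithin k (D 0) s) (D k) s := by
  induction k with
  | zero => exact fun t _ => by rw [iteratedDerivWithin_zero]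
  | succ k ih =>
    intro t ht
    rw [iteratedDerivWithin_succ, derivWithin_congr ih (ih ht)]
    exact (hD k t ht).derivWithin (hs t ht)

theorem taylor_sum_le_of_odd_of_deriv_nonneg {D : ℕ → ℝ → ℝ} {I : Set ℝ} (hI : I.OrdConnected)
    (hD : ∀ k, ∀ t ∈ I, HasDerivAt (D k) (D (k + 1) t) t) {n : ℕ} (hn : Odd n)
    (hnonneg : ∀ t ∈ I, 0 ≤ D (n + 1) t) {p x : ℝ} (hp : p ∈ I) (hx : x ∈ I) :
    ∑ k ∈ Finset.range (n + 1), D k p / k ! * (x - p) ^ k ≤ D 0 x := by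
  rcases eq_or_ne p x with rfl | hpx
  · rw [Finset.sum_eq_single_of_mem 0 (by simp) fun k _ hk => by simp [zero_pow hk]]
    simp
  set s := uIcc p x
  have hsI : s ⊆ I := hI.uIcc_subset hp hx
  have hDs : ∀ k, ∀ t ∈ s, HasDerivWithinAt (D k) (D (k + 1) t) s t :=
    fun k t ht => (hD k t (hsI ht)).hasDerivWithinAt
  have hiter := iteratedDerivWithin_eqOn_of_hasDerivWithinAt (uniqueDiffOn_uIcc hpx) hDs
  have hdiff : ∀ k, DifferentiableOn ℝ (iteratedDerivWithin k (D 0) s) s := fun k =>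
    DifferentiableOn.congr (fun t ht => (hDs k t ht).differentiableWithinAt) (hiter k)
  obtain ⟨ξ, hξ, hrem⟩ := taylor_mean_remainder_lagrange hpx
    (contDiffOn_of_differentiableOn_deriv fun m _ => hdiff m)
    ((hdiff n).mono uIoo_subset_uIcc_self)
  have htaylor :
      taylorWithinEval (D 0) n s p x = ∑ k ∈ Finset.range (n + 1), D k p / k ! * (x - p) ^ k := by
    rw [taylor_within_apply]
    refine Finset.sum_congr rfl fun k _ => ?_
    rw [hiter k left_mem_uIcc, smul_eq_mul]
    ring
  rw [← htaylor, ← sub_nonneg, hrem, hiter (n + 1) (uIoo_subset_uIcc_self hξ)]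
  have hderiv := hnonneg ξ (hsI (uIoo_subset_uIcc_self hξ))
  have hpow := hn.add_one.pow_nonneg (x - p)
  positivity

theorem binEnt_eq_binEntropy : binEnt = binEntropy := by
  ext t
  rw [binEntropy_eq_negMulLog_add_negMulLog_one_sub, binEnt, negMulLog, negMulLog]
  ring

noncomputable def negBinEntDeriv : ℕ → ℝ → ℝ
  | 0 => fun t => -binEnt t
  | 1 => fun t => log t - log (1 - t)
  | k + 2 => fun t => k ! * ((-1) ^ k * t ^ (-(k + 1 : ℤ)) + (1 - t) ^ (-(k + 1 : ℤ)))

theorem hasDerivAt_negBinEntDeriv (k : ℕ) {t : ℝ} (h0 : t ≠ 0) (h1 : t ≠ 1) :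
    HasDerivAt (negBinEntDeriv k) (negBinEntDeriv (k + 1) t) t := by
  have h1' : 1 - t ≠ 0 := sub_ne_zero.2 h1.symm
  have hsub : HasDerivAt (fun t : ℝ => 1 - t) (-1) t := by
    simpa using (hasDerivAt_id t).const_sub 1
  match k with
  | 0 =>
    show HasDerivAt (fun t => -binEnt t) _ t
    rw [binEnt_eq_binEntropy]
    exact (hasDerivAt_binEntropy h0 h1).neg.congr_deriv (by simp [negBinEntDeriv])
  | 1 =>
    refine ((hasDerivAt_log h0).sub ((hasDerivAt_log h1').comp t hsub)).congr_deriv ?_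
    simp [negBinEntDeriv]
  | k + 2 =>
    have hpow := (hasDerivAt_zpow (-(k + 1 : ℤ)) t (Or.inl h0)).const_mul ((-1 : ℝ) ^ k)
    have hpow' := (hasDerivAt_zpow (-(k + 1 : ℤ)) (1 - t) (Or.inl h1')).comp t hsub
    refine ((hpow.add hpow').const_mul (k ! : ℝ)).congr_deriv ?_
    simp only [negBinEntDeriv, factorial_succ]
    have hexp : -((k : ℤ) + 1) - 1 = -((k + 1 : ℕ) + 1 : ℤ) := by push_cast; ring
    rw [hexp]
    push_cast
    ring

theorem negBinEntDeriv_nonneg_of_even {k : ℕ} (hk : Even k) {t : ℝ} (ht : t ∈ Ioo 0 1) :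
    0 ≤ negBinEntDeriv (k + 2) t := by
  obtain ⟨ht0, ht1⟩ := ht
  have h1t : 0 < 1 - t := sub_pos.2 ht1
  simp only [negBinEntDeriv, hk.neg_one_pow, one_mul]
  positivity

theorem negBinEntDeriv_div_factorial {k : ℕ} (hk : 1 ≤ k) {p : ℝ} (hp : p ∈ Ioo 0 1) :
    negBinEntDeriv k p / k ! = Fcoef k p := by
  match k, hk with
  | 1, _ =>
    rw [Fcoef, if_pos rfl, log_div hp.1.ne' (sub_pos.2 hp.2).ne']
    simp [negBinEntDeriv]
  | k + 2, _ =>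
    rw [Fcoef, if_neg (by omega)]
    simp only [negBinEntDeriv, factorial_succ]
    have hz : -(((k + 2 : ℕ) : ℤ) - 1) = -(k + 1 : ℤ) := by push_cast; ring
    have hr : ((k + 2 : ℕ) : ℝ) - 1 = k + 1 := by push_cast; ring
    rw [hz, hr, pow_add, neg_one_sq, mul_one]
    push_cast
    field_simp
    ring

theorem binEnt_taylor_lower_bound (p : ℝ) (hp : p ∈ Set.Ioo (0:ℝ) 1)
    (x : ℝ) (hx : x ∈ Set.Ioo (0:ℝ) 1) (l : ℕ) :
    binEnt p - binEnt x ≥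
      ∑ k ∈ Finset.Icc 1 (2 * l + 1), Fcoef k p * (x - p) ^ k := by
  have htaylor := taylor_sum_le_of_odd_of_deriv_nonneg ordConnected_Ioo
    (fun k t ht => hasDerivAt_negBinEntDeriv k ht.1.ne' ht.2.ne) (odd_two_mul_add_one l)
    (fun t ht => negBinEntDeriv_nonneg_of_even (even_two_mul l) ht) hp hx
  rw [Finset.sum_range_succ'] at htaylor
  have hcoef : ∑ k ∈ Finset.range (2 * l + 1),
      negBinEntDeriv (k + 1) p / (k + 1)! * (x - p) ^ (k + 1) =
      ∑ k ∈ Finset.Icc 1 (2 * l + 1), Fcoef k p * (x - p) ^ k := by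
    rw [Finset.range_eq_Ico, Finset.sum_Ico_add' (fun k => negBinEntDeriv k p / k ! * (x - p) ^ k)]
    refine Finset.sum_congr rfl fun k hk => ?_
    rw [negBinEntDeriv_div_factorial (Finset.mem_Icc.1 hk).1 hp]
  rw [hcoef, negBinEntDeriv.eq_1] at htaylor
  simp only [factorial_zero, cast_one, div_one, pow_zero, mul_one] at htaylor
  linarith
end

section
/- Let P = {p_i} and Q = {q_i} be probability distributions on a finite alphabet A, let p ∈ (0,1), q = 1−p, M = pP + qQ. Then p·D(P‖M) + q·D(Q‖M) = ∑_{ν=1}^∞ [1/(2ν(2ν−1))] · ∑_{i∈A} |p p_i − q q_i|^{2ν} / (p p_i + q q_i)^{2ν−1} − (log 2 − H(p)), where D is the Kullback–Leibler divergence (natural log) and H(p) the binary entropy. -/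
/-!
Write `a = p pᵢ`, `b = q qᵢ`, `m = a + b` and `t = (a - b) / m ∈ [-1, 1]`. Then
`a log (a/m) + b log (b/m) + m log 2 = m φ(t)` with
`φ(t) = ((1 + t) log (1 + t) + (1 - t) log (1 - t)) / 2 = ∑_{ν ≥ 1} t^{2ν} / (2ν(2ν - 1))`,
the last identity being `t · artanh t + ½ log (1 - t²)` expanded in power series for `|t| < 1`;
at `|t| = 1` it is the series `∑ 1/(2ν(2ν - 1)) = log 2`, which follows from
`H_{2n} - H_n → log 2`. Summing over the alphabet, `∑ m = 1` turns `m log 2` into `log 2`,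
while splitting `log (p pᵢ / m) = log p + log (pᵢ / m)` produces the divergences and `-H(p)`.
-/

open Real

open Filter Finset Topology

lemma sum_range_inv_odd_mul_even (n : ℕ) :
    ∑ ν ∈ range n, 1 / ((2 * (ν : ℝ) + 1) * (2 * ν + 2)) = harmonic (2 * n) - harmonic n := by
  induction n with
  | zero => simp
  | succ n ih =>
    rw [sum_range_succ, ih, show 2 * (n + 1) = 2 * n + 1 + 1 by ring,
      harmonic_succ, harmonic_succ, harmonic_succ]
    push_cast
    field_simp
    ring

lemma hasSum_inv_odd_mul_even :
    HasSum (fun ν : ℕ => 1 / ((2 * (ν : ℝ) + 1) * (2 * ν + 2))) (log 2) := by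
  rw [hasSum_iff_tendsto_nat_of_nonneg (fun ν => by positivity)]
  simp only [sum_range_inv_odd_mul_even]
  have h_even : Tendsto (fun n : ℕ => (harmonic (2 * n) : ℝ) - log (2 * n)) atTop
      (𝓝 eulerMascheroniConstant) :=
    (tendsto_harmonic_sub_log.comp (tendsto_id.const_mul_atTop' two_pos)).congr fun n => by
      simp
  have := (h_even.sub tendsto_harmonic_sub_log).add_const (log 2)
  rw [sub_self, zero_add] at this
  refine this.congr' ?_
  filter_upwards [eventually_ne_atTop 0] with n hn
  rw [log_mul two_ne_zero (Nat.cast_ne_zero.mpr hn)]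
  ring

lemma hasSum_pow_even_div_of_abs_le_one {t : ℝ} (ht : |t| ≤ 1) :
    HasSum (fun ν : ℕ => t ^ (2 * ν + 2) / ((2 * (ν : ℝ) + 1) * (2 * ν + 2)))
      (((1 + t) * log (1 + t) + (1 - t) * log (1 - t)) / 2) := by
  rcases ht.lt_or_eq with ht | ht
  · have h_artanh := (hasSum_log_sub_log_of_abs_lt_one ht).mul_left t
    have h_log := hasSum_pow_div_log_of_abs_lt_one (x := t ^ 2)
      (by rwa [abs_pow, sq_lt_one_iff₀ (abs_nonneg t)])
    have h_value : ((1 + t) * log (1 + t) + (1 - t) * log (1 - t)) / 2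
        = (t * (log (1 + t) - log (1 - t)) - -log (1 - t ^ 2)) / 2 := by
      rw [show 1 - t ^ 2 = (1 + t) * (1 - t) by ring,
        log_mul (by linarith [neg_abs_le t]) (by linarith [le_abs_self t])]
      ring
    rw [h_value]
    refine ((h_artanh.sub h_log).div_const 2).congr_fun fun ν => ?_
    rw [← pow_mul, mul_add_one]
    field_simp
    ring
  · have h_value : ((1 + t) * log (1 + t) + (1 - t) * log (1 - t)) / 2 = log 2 := by
      rcases abs_eq zero_le_one |>.mp ht with rfl | rfl <;> norm_num
    have ht2 : t ^ 2 = 1 := by rw [← sq_abs, ht, one_pow]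
    rw [h_value]
    refine hasSum_inv_odd_mul_even.congr_fun fun ν => ?_
    rw [show 2 * ν + 2 = 2 * (ν + 1) by ring, pow_mul, ht2, one_pow]

lemma mul_log_mul_div {c x y : ℝ} (hc : c ≠ 0) (hxy : x ≠ 0 → y ≠ 0) :
    x * log (c * x / y) = x * log (x / y) + x * log c := by
  rcases eq_or_ne x 0 with rfl | hx
  · simp
  · rw [mul_div_assoc, log_mul hc (div_ne_zero hx (hxy hx))]
    ring

lemma sum_mul_mul_log_mul_div {ι : Type*} (s : Finset ι) {c : ℝ} (hc : c ≠ 0) {x y : ι → ℝ}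
    (hxy : ∀ i ∈ s, x i ≠ 0 → y i ≠ 0) :
    ∑ i ∈ s, c * x i * log (c * x i / y i)
      = c * ∑ i ∈ s, x i * log (x i / y i) + c * (∑ i ∈ s, x i) * log c := by
  rw [mul_sum, mul_sum, sum_mul, ← sum_add_distrib]
  refine sum_congr rfl fun i hi => ?_
  rw [mul_assoc, mul_log_mul_div hc (hxy i hi)]
  ring

lemma hasSum_abs_sub_pow_div_add_pow {a b : ℝ} (ha : 0 ≤ a) (hb : 0 ≤ b) :
    HasSum (fun ν : ℕ => 1 / ((2 * ((ν : ℝ) + 1)) * (2 * ((ν : ℝ) + 1) - 1)) *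
        (|a - b| ^ (2 * (ν + 1)) / (a + b) ^ (2 * (ν + 1) - 1)))
      (a * log (a / (a + b)) + b * log (b / (a + b)) + (a + b) * log 2) := by
  rcases (add_nonneg ha hb).eq_or_lt with hab | hab
  · obtain ⟨rfl, rfl⟩ : a = 0 ∧ b = 0 := ⟨by linarith, by linarith⟩
    simp
  have hab' : a + b ≠ 0 := hab.ne'
  have ht : |(a - b) / (a + b)| ≤ 1 := by
    rw [abs_div, abs_of_pos hab, div_le_one hab]
    exact abs_le.mpr ⟨by linarith, by linarith⟩
  have h_value : (a + b) * (((1 + (a - b) / (a + b)) * log (1 + (a - b) / (a + b))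
        + (1 - (a - b) / (a + b)) * log (1 - (a - b) / (a + b))) / 2)
      = a * log (a / (a + b)) + b * log (b / (a + b)) + (a + b) * log 2 := by
    rw [show 1 + (a - b) / (a + b) = 2 * a / (a + b) by field_simp; ring,
      show 1 - (a - b) / (a + b) = 2 * b / (a + b) by field_simp; ring]
    have h_scale : (a + b) * ((2 * a / (a + b) * log (2 * a / (a + b))
        + 2 * b / (a + b) * log (2 * b / (a + b))) / 2)
        = a * log (2 * a / (a + b)) + b * log (2 * b / (a + b)) := by
      field_simp
    rw [h_scale, mul_log_mul_div two_ne_zero fun _ => hab',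
      mul_log_mul_div two_ne_zero fun _ => hab']
    ring
  rw [← h_value]
  refine ((hasSum_pow_even_div_of_abs_le_one ht).mul_left (a + b)).congr_fun fun ν => ?_
  rw [show 2 * (ν + 1) - 1 = 2 * ν + 1 by omega, Even.pow_abs ⟨ν + 1, by ring⟩ (a - b), div_pow,
    pow_succ (a + b) (2 * ν + 1), show 2 * ((ν : ℝ) + 1) - 1 = 2 * ν + 1 by ring]
  field_simp
  ring

theorem capacitory_discrimination_series {α : Type*} [Fintype α]
    (P Q : α → ℝ) (hP0 : ∀ i, 0 ≤ P i) (hQ0 : ∀ i, 0 ≤ Q i)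
    (hP1 : ∑ i, P i = 1) (hQ1 : ∑ i, Q i = 1)
    (p : ℝ) (hp : p ∈ Set.Ioo (0:ℝ) 1) :
    p * (∑ i, P i * Real.log (P i / (p * P i + (1 - p) * Q i)))
      + (1 - p) * (∑ i, Q i * Real.log (Q i / (p * P i + (1 - p) * Q i)))
    = (∑' ν : ℕ, (1 : ℝ) / ((2 * (ν + 1)) * (2 * (ν + 1) - 1)) *
        ∑ i, |p * P i - (1 - p) * Q i| ^ (2 * (ν + 1)) /
              (p * P i + (1 - p) * Q i) ^ (2 * (ν + 1) - 1))
      - (Real.log 2 - binEnt p) := by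
  obtain ⟨hp0, hp1⟩ := hp
  have hq0 : 0 < 1 - p := sub_pos.mpr hp1
  have h_series := hasSum_sum fun i (_ : i ∈ univ) =>
    hasSum_abs_sub_pow_div_add_pow (mul_nonneg hp0.le (hP0 i)) (mul_nonneg hq0.le (hQ0 i))
  simp only [← mul_sum] at h_series
  have hPM : ∀ i ∈ univ, P i ≠ 0 → p * P i + (1 - p) * Q i ≠ 0 := fun i _ hPi =>
    (add_pos_of_pos_of_nonneg (mul_pos hp0 ((hP0 i).lt_of_ne' hPi))
      (mul_nonneg hq0.le (hQ0 i))).ne'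
  have hQM : ∀ i ∈ univ, Q i ≠ 0 → p * P i + (1 - p) * Q i ≠ 0 := fun i _ hQi =>
    (add_pos_of_nonneg_of_pos (mul_nonneg hp0.le (hP0 i))
      (mul_pos hq0 ((hQ0 i).lt_of_ne' hQi))).ne'
  rw [h_series.tsum_eq, sum_add_distrib, sum_add_distrib, ← sum_mul,
    sum_mul_mul_log_mul_div univ hp0.ne' hPM, sum_mul_mul_log_mul_div univ hq0.ne' hQM,
    sum_add_distrib, ← mul_sum, ← mul_sum, hP1, hQ1, binEnt]
  ring
end

section
/- For p ∈ (0,1) and n ≥ 1, H[B(n+1,p)] − H[B(n,p)] = H(p) − ∑_{i=0}^{n+1} H(i/(n+1)) · P_{B(n+1,p)}(i), where H on the right denotes the binary entropy function. -/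
open Real

/-!
Write `P m k` for `binomPmf m p k`. Since `negMulLog (a * b) = b * negMulLog a + a * negMulLog b`,
`P (n+1) k * binEnt x = negMulLog (P (n+1) k * x) + negMulLog (P (n+1) k * (1 - x)) - negMulLog (P (n+1) k)`
with `x = k / (n + 1)`. Degree elevation of Bernstein polynomials gives
`P (n+1) (k+1) * ((k+1) / (n+1)) = p * P n k` and `P (n+1) k * (1 - k / (n+1)) = (1 - p) * P n k`,
so summing over `k` the three families contribute `negMulLog p + p * binomEnt n p`,
`negMulLog (1 - p) + (1 - p) * binomEnt n p` and `binomEnt (n + 1) p`.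
-/

open Finset

lemma binEnt_eq_negMulLog_add (x : ℝ) : binEnt x = negMulLog x + negMulLog (1 - x) := by
  simp only [binEnt, negMulLog]
  ring

lemma mul_binEnt (a x : ℝ) :
    a * binEnt x = negMulLog (a * x) + negMulLog (a * (1 - x)) - negMulLog a := by
  rw [binEnt_eq_negMulLog_add, negMulLog_mul, negMulLog_mul]
  ring

lemma binomEnt_eq_sum_negMulLog (n : ℕ) (p : ℝ) :
    binomEnt n p = ∑ k ∈ range (n + 1), negMulLog (binomPmf n p k) := by
  simp only [binomEnt, negMulLog, neg_mul, sum_neg_distrib]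

lemma binomPmf_of_lt {n k : ℕ} (h : n < k) (p : ℝ) : binomPmf n p k = 0 := by
  simp [binomPmf, Nat.choose_eq_zero_of_lt h]

lemma sum_binomPmf (n : ℕ) (p : ℝ) : ∑ k ∈ range (n + 1), binomPmf n p k = 1 := by
  have h := add_pow p (1 - p) n
  rw [add_sub_cancel, one_pow] at h
  rw [h]
  exact sum_congr rfl fun k _ => by unfold binomPmf; ring

lemma sum_negMulLog_mul_binomPmf (n : ℕ) (p c : ℝ) :
    ∑ k ∈ range (n + 1), negMulLog (c * binomPmf n p k) = negMulLog c + c * binomEnt n p := by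
  simp only [negMulLog_mul, sum_add_distrib, ← sum_mul, ← mul_sum, sum_binomPmf, one_mul,
    binomEnt_eq_sum_negMulLog]

lemma binomPmf_succ_mul_div (n k : ℕ) (p : ℝ) :
    binomPmf (n + 1) p (k + 1) * ((k + 1 : ℕ) / (n + 1 : ℝ)) = p * binomPmf n p k := by
  have hchoose : ((n : ℝ) + 1) * n.choose k = (n + 1).choose (k + 1) * ((k : ℝ) + 1) := by
    exact_mod_cast Nat.add_one_mul_choose_eq n k
  rw [binomPmf, binomPmf, Nat.add_sub_add_right]
  field_simp
  push_cast
  linear_combination p ^ (k + 1) * (1 - p) ^ (n - k) * hchoose.symm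

lemma binomPmf_succ_mul_one_sub_div (n k : ℕ) (p : ℝ) :
    binomPmf (n + 1) p k * (1 - k / (n + 1 : ℝ)) = (1 - p) * binomPmf n p k := by
  obtain hk | rfl | hk := lt_trichotomy k (n + 1)
  · have hchoose : (n.choose k : ℝ) * ((n : ℝ) + 1) = (n + 1).choose k * ((n : ℝ) + 1 - k) := by
      have hnat := congrArg (Nat.cast : ℕ → ℝ) (Nat.choose_mul_succ_eq n k)
      push_cast [Nat.cast_sub hk.le] at hnat
      exact hnat
    rw [binomPmf, binomPmf, show n + 1 - k = n - k + 1 by omega, pow_succ]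
    field_simp
    linear_combination -(p ^ k * (1 - p) ^ (n - k) * (1 - p)) * hchoose
  · rw [Nat.cast_add_one, div_self (by positivity), sub_self, mul_zero,
      binomPmf_of_lt (Nat.lt_succ_self n), mul_zero]
  · rw [binomPmf_of_lt hk, binomPmf_of_lt (by omega), zero_mul, mul_zero]

lemma sum_negMulLog_binomPmf_succ_mul_div (n : ℕ) (p : ℝ) :
    ∑ k ∈ range (n + 2), negMulLog (binomPmf (n + 1) p k * (k / (n + 1 : ℝ))) =
      negMulLog p + p * binomEnt n p := by
  rw [sum_range_succ', ← sum_negMulLog_mul_binomPmf]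
  simp only [binomPmf_succ_mul_div, Nat.cast_zero, zero_div, mul_zero, negMulLog_zero, add_zero]

lemma sum_negMulLog_binomPmf_succ_mul_one_sub_div (n : ℕ) (p : ℝ) :
    ∑ k ∈ range (n + 2), negMulLog (binomPmf (n + 1) p k * (1 - k / (n + 1 : ℝ))) =
      negMulLog (1 - p) + (1 - p) * binomEnt n p := by
  rw [sum_range_succ, ← sum_negMulLog_mul_binomPmf]
  simp only [binomPmf_succ_mul_one_sub_div, binomPmf_of_lt (Nat.lt_succ_self n), mul_zero,
    negMulLog_zero, add_zero]

theorem binomEnt_diff_eq_general (p : ℝ) (n : ℕ) :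
    binomEnt (n + 1) p - binomEnt n p =
      binEnt p - ∑ i ∈ Finset.range (n + 2),
        binEnt ((i : ℝ) / (n + 1)) * binomPmf (n + 1) p i := by
  simp_rw [mul_comm (binEnt _), mul_binEnt, sum_sub_distrib, sum_add_distrib,
    sum_negMulLog_binomPmf_succ_mul_div, sum_negMulLog_binomPmf_succ_mul_one_sub_div]
  rw [← binomEnt_eq_sum_negMulLog, binEnt_eq_negMulLog_add]
  ring

theorem binomEnt_diff_eq (p : ℝ) (hp : p ∈ Set.Ioo (0:ℝ) 1) (n : ℕ) (hn : 1 ≤ n) :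
    binomEnt (n + 1) p - binomEnt n p =
      binEnt p - ∑ i ∈ Finset.range (n + 2),
        binEnt ((i : ℝ) / (n + 1)) * binomPmf (n + 1) p i :=
  binomEnt_diff_eq_general p n
end

section
/- Let P be the law of X^{(n)}+1 and Q be the law of X^{(n)}, where X^{(n)} ~ B(n,p). Then for each i ∈ {0,...,n+1}, |p·P(i) − (1−p)·Q(i)| / (p·P(i) + (1−p)·Q(i)) = |2i − n − 1|/(n+1). -/
/-!
Both weighted masses are proportional to the `B(n+1, p)` mass at `i`:
`p · P(i) = i/(n+1) · B_{n+1}(i)` and `(1-p) · Q(i) = (n+1-i)/(n+1) · B_{n+1}(i)`,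
by the absorption identities for binomial coefficients. The ratio is therefore
`|i - (n+1-i)| / (n+1)`.
-/

open Real

noncomputable def shiftPmf (n : ℕ) (p : ℝ) (i : ℕ) : ℝ :=
  if i = 0 then 0 else binomPmf n p (i - 1)

lemma binomPmf_pos {p : ℝ} (hp : p ∈ Set.Ioo (0 : ℝ) 1) {n i : ℕ} (hi : i ≤ n) :
    0 < binomPmf n p i := by
  obtain ⟨hp0, hp1⟩ := hp
  have := sub_pos.2 hp1
  have := Nat.choose_pos hi
  unfold binomPmf
  positivity

lemma mul_shiftPmf (n : ℕ) (p : ℝ) (i : ℕ) :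
    p * shiftPmf n p i * (n + 1) = i * binomPmf (n + 1) p i := by
  rcases i with _ | j
  · simp [shiftPmf]
  · have absorb : ((n : ℝ) + 1) * n.choose j = (n + 1).choose (j + 1) * ((j : ℝ) + 1) := by
      exact_mod_cast Nat.add_one_mul_choose_eq n j
    simp only [shiftPmf, binomPmf, Nat.add_one_ne_zero, if_false, Nat.add_sub_cancel,
      Nat.add_sub_add_right, Nat.cast_add_one]
    linear_combination p ^ (j + 1) * (1 - p) ^ (n - j) * absorb

lemma mul_binomPmf (n : ℕ) (p : ℝ) (i : ℕ) :
    (1 - p) * binomPmf n p i * (n + 1) = ((n + 1 - i : ℕ) : ℝ) * binomPmf (n + 1) p i := by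
  have absorb : (n.choose i : ℝ) * (n + 1) = (n + 1).choose i * ((n + 1 - i : ℕ) : ℝ) := by
    exact_mod_cast Nat.choose_mul_succ_eq n i
  rcases le_or_gt i n with hi | hi
  · have hpow : (1 - p) * (1 - p) ^ (n - i) = (1 - p) ^ (n + 1 - i) := by
      rw [← pow_succ', Nat.sub_add_comm hi]
    unfold binomPmf
    linear_combination p ^ i * (1 - p) ^ (n + 1 - i) * absorb
      + (n.choose i : ℝ) * p ^ i * (n + 1) * hpow
  · simp [binomPmf, Nat.choose_eq_zero_of_lt hi, Nat.sub_eq_zero_of_le hi]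

theorem triangular_ratio (n : ℕ) (p : ℝ) (hp : p ∈ Set.Ioo (0:ℝ) 1)
    (i : ℕ) (hi : i ≤ n + 1) :
    |p * shiftPmf n p i - (1 - p) * binomPmf n p i| /
        (p * shiftPmf n p i + (1 - p) * binomPmf n p i) =
      |2 * (i : ℝ) - n - 1| / (n + 1) := by
  have hB := binomPmf_pos hp hi
  have hn : (0 : ℝ) < n + 1 := by positivity
  have hP := mul_shiftPmf n p i
  have hQ := mul_binomPmf n p i
  rw [Nat.cast_sub hi, Nat.cast_add_one] at hQ
  have hdiff : p * shiftPmf n p i - (1 - p) * binomPmf n p i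
      = (2 * i - n - 1) / (n + 1) * binomPmf (n + 1) p i := by
    field_simp
    linear_combination hP - hQ
  have hsum : p * shiftPmf n p i + (1 - p) * binomPmf n p i = binomPmf (n + 1) p i := by
    apply mul_right_cancel₀ hn.ne'
    linear_combination hP + hQ
  rw [hdiff, hsum, abs_mul, abs_of_pos hB, abs_div, abs_of_pos hn, mul_div_cancel_right₀ _ hB.ne']
end
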